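/- (Algebraic core of: the type IIB♭ MCK Lefschetz pencil of odd genus has spin total space.) Let g be odd, g ≥ 3. In V, define the vectors: B_{0,2} = α_1+⋯+α_g+δ_6+δ_7; B_{1,2} = α_1+⋯+α_g+β_1+β_g+δ_6+δ_7; B_{2i,2} = α_{i+1}+⋯+α_{g−i}+β_i+β_{g+1−i}+δ_6+δ_7 for 1 ≤ i ≤ (g−1)/2; B_{2i+1,2} = α_{i+1}+⋯+α_{g−i}+β_{i+1}+β_{g−i}+δ_6+δ_7 for 1 ≤ i ≤ (g−3)/2; B_{g,2} = α_{(g+1)/2}+δ_2+δ_4+δ_7+δ_8; a_1 = β_{(g+1)/2}+δ_7; a_2 = β_{(g+1)/2}+δ_5; b_1 = β_{(g+1)/2}+δ_2+δ_4+δ_8; b_2 = β_{(g+1)/2}+δ_2+δ_4+δ_6; B_{k,1} = B_{k,2}+δ_3+δ_4 for 0 ≤ k ≤ g; a_3 = β_{(g+1)/2}+δ_3; a_4 = β_{(g+1)/2}+δ_3+δ_5+δ_7; b_3 = β_{(g+1)/2}+δ_2; b_4 = β_{(g+1)/2}+δ_2+δ_6+δ_8. Then there exists a quadratic form q with respect to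 B such that q takes the value 1 on each of the vectors B_{k,j} (0 ≤ k ≤ g, j ∈ {1,2}), a_1, a_2, a_3, a_4, b_1, b_2, b_3, b_4, and q(δ_j) = 1 for all j ∈ {1, …, 8}. -/
import Mathlib


/-- The mod-2 first homology of the compact genus-`g` surface with 8 boundary
components: freely spanned by `α_1, …, α_g, β_1, …, β_g, δ_1, …, δ_7`. -/
abbrev MCKVec (g : ℕ) := (Fin g ⊕ Fin g ⊕ Fin 7) → ZMod 2

/-- The basis vector `α_i` (for `1 ≤ i ≤ g`). -/
def alph (g i : ℕ) : MCKVec g := fun x =>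
  match x with
  | Sum.inl j => if (j : ℕ) + 1 = i then 1 else 0
  | _ => 0

/-- The basis vector `β_i` (for `1 ≤ i ≤ g`). -/
def bet (g i : ℕ) : MCKVec g := fun x =>
  match x with
  | Sum.inr (Sum.inl j) => if (j : ℕ) + 1 = i then 1 else 0
  | _ => 0

/-- The basis vector `δ_j` (for `1 ≤ j ≤ 7`). -/
def dlt' (g j : ℕ) : MCKVec g := fun x =>
  match x with
  | Sum.inr (Sum.inr k) => if (k : ℕ) + 1 = j then 1 else 0
  | _ => 0

/-- The boundary classes `δ_1, …, δ_7`, with `δ_8 := δ_1 + δ_2 + ⋯ + δ_7`. -/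
def dlt (g j : ℕ) : MCKVec g :=
  if j = 8 then
    dlt' g 1 + dlt' g 2 + dlt' g 3 + dlt' g 4 + dlt' g 5 + dlt' g 6 + dlt' g 7
  else dlt' g j

/-- The mod-2 intersection pairing: the symmetric bilinear form determined by
`B(α_i, β_i) = 1` for each `i` and `B = 0` on every other pair of basis vectors. -/
def Bform (g : ℕ) (x y : MCKVec g) : ZMod 2 :=
  ∑ j : Fin g,
    (x (Sum.inl j) * y (Sum.inr (Sum.inl j)) + x (Sum.inr (Sum.inl j)) * y (Sum.inl j))

/-- The homology classes of the vanishing cycles  (first half of the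
monodromy factorization), as computed in the paper. -/
def BIIBflat (g k : ℕ) : MCKVec g :=
  if k = 0 then (∑ m ∈ Finset.Icc 1 g, alph g m) + dlt g 6 + dlt g 7
  else if k = 1 then (∑ m ∈ Finset.Icc 1 g, alph g m) + bet g 1 + bet g g + dlt g 6 + dlt g 7
  else if k = g then alph g ((g + 1) / 2) + dlt g 2 + dlt g 4 + dlt g 7 + dlt g 8
  else if k % 2 = 0 then
    (∑ m ∈ Finset.Icc (k / 2 + 1) (g - k / 2), alph g m)
      + bet g (k / 2) + bet g (g + 1 - k / 2) + dlt g 6 + dlt g 7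
  else
    (∑ m ∈ Finset.Icc ((k - 1) / 2 + 1) (g - (k - 1) / 2), alph g m)
      + bet g ((k - 1) / 2 + 1) + bet g (g - (k - 1) / 2) + dlt g 6 + dlt g 7

def qform (g : ℕ) (x : MCKVec g) : ZMod 2 :=
  (∑ j : Fin g, x (Sum.inl j) * x (Sum.inr (Sum.inl j)))
  + (∑ j : Fin g, (if (j : ℕ) + 1 = (g + 1) / 2 then 1 else 0) * x (Sum.inl j))
  + (∑ k : Fin 7, x (Sum.inr (Sum.inr k)))

lemma qform_add (g : ℕ) (x y : MCKVec g) :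
    qform g (x + y) = qform g x + qform g y + Bform g x y := by
  simp only [qform, Bform, Pi.add_apply]
  have key : ∀ j : Fin g,
      (x (Sum.inl j) + y (Sum.inl j)) * (x (Sum.inr (Sum.inl j)) + y (Sum.inr (Sum.inl j)))
        = x (Sum.inl j) * x (Sum.inr (Sum.inl j)) + y (Sum.inl j) * y (Sum.inr (Sum.inl j))
          + (x (Sum.inl j) * y (Sum.inr (Sum.inl j)) + x (Sum.inr (Sum.inl j)) * y (Sum.inl j)) :=
    fun j => by ring
  rw [Finset.sum_congr rfl (fun j _ => key j)]
  simp only [mul_add, Finset.sum_add_distrib]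
  ring

lemma sum_ind {g : ℕ} (t : ℕ) (h1 : 1 ≤ t) (h2 : t ≤ g) (f : Fin g → ZMod 2) :
    (∑ j : Fin g, if (j : ℕ) + 1 = t then f j else 0) = f ⟨t - 1, by omega⟩ := by
  rw [Finset.sum_eq_single (⟨t - 1, by omega⟩ : Fin g)]
  · have ht : ((⟨t - 1, by omega⟩ : Fin g) : ℕ) + 1 = t := by simp; omega
    rw [if_pos ht]
  · intro b _ hb
    rw [if_neg]
    intro hc
    exact hb (Fin.ext (by simp; omega))
  · intro h; exact absurd (Finset.mem_univ _) h

lemma q_bet (g i : ℕ) : qform g (bet g i) = 0 := by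
  simp [qform, bet]

lemma B_dlt (g : ℕ) (x : MCKVec g) (j : ℕ) : Bform g x (dlt g j) = 0 := by
  unfold dlt
  split <;> simp [Bform, dlt', Pi.add_apply]

lemma q_dlt (g : ℕ) (j : ℕ) (h1 : 1 ≤ j) (h2 : j ≤ 8) : qform g (dlt g j) = 1 := by
  interval_cases j <;> simp [qform, dlt, dlt', Fin.sum_univ_seven] <;> decide

lemma B_add_left (g : ℕ) (x y z : MCKVec g) :
    Bform g (x + y) z = Bform g x z + Bform g y z := by
  simp only [Bform, Pi.add_apply, add_mul, Finset.sum_add_distrib]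
  ring

lemma q_add_dlt (g : ℕ) (x : MCKVec g) (j : ℕ) (h1 : 1 ≤ j) (h2 : j ≤ 8) :
    qform g (x + dlt g j) = qform g x + 1 := by
  rw [qform_add, B_dlt, q_dlt g j h1 h2, add_zero]

lemma S_inl (g a b : ℕ) (j : Fin g) :
    (∑ m ∈ Finset.Icc a b, alph g m) (Sum.inl j)
      = if (j : ℕ) + 1 ∈ Finset.Icc a b then 1 else 0 := by
  rw [Finset.sum_apply]
  simp [alph, Finset.sum_ite_eq]

lemma S_inr (g a b : ℕ) (w : Fin g ⊕ Fin 7) :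
    (∑ m ∈ Finset.Icc a b, alph g m) (Sum.inr w) = 0 := by
  rw [Finset.sum_apply]
  rcases w with w | w <;> simp [alph]

lemma q_S (g a b : ℕ) (hg : 1 ≤ g) :
    qform g (∑ m ∈ Finset.Icc a b, alph g m)
      = if (g + 1) / 2 ∈ Finset.Icc a b then 1 else 0 := by
  have h1 : 1 ≤ (g + 1) / 2 := by omega
  have h2 : (g + 1) / 2 ≤ g := by omega
  rw [qform]
  rw [show (∑ j : Fin g, (if (j : ℕ) + 1 = (g + 1) / 2 then 1 else 0)
        * (∑ m ∈ Finset.Icc a b, alph g m) (Sum.inl j))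
      = ∑ j : Fin g, (if (j : ℕ) + 1 = (g + 1) / 2 then
          (∑ m ∈ Finset.Icc a b, alph g m) (Sum.inl j) else 0) from
    Finset.sum_congr rfl (fun j _ => by split <;> simp)]
  rw [sum_ind ((g + 1) / 2) h1 h2]
  simp only [S_inr, S_inl, mul_zero, Finset.sum_const_zero, add_zero, zero_add]
  have hv : ((⟨(g + 1) / 2 - 1, by omega⟩ : Fin g) : ℕ) + 1 = (g + 1) / 2 := by simp; omega
  rw [hv]

lemma B_S_bet (g a b i : ℕ) (h1 : 1 ≤ i) (h2 : i ≤ g) :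
    Bform g (∑ m ∈ Finset.Icc a b, alph g m) (bet g i)
      = if i ∈ Finset.Icc a b then 1 else 0 := by
  rw [Bform]
  rw [show (∑ j : Fin g, ((∑ m ∈ Finset.Icc a b, alph g m) (Sum.inl j)
          * bet g i (Sum.inr (Sum.inl j))
        + (∑ m ∈ Finset.Icc a b, alph g m) (Sum.inr (Sum.inl j)) * bet g i (Sum.inl j)))
      = ∑ j : Fin g, (if (j : ℕ) + 1 = i then
          (∑ m ∈ Finset.Icc a b, alph g m) (Sum.inl j) else 0) from
    Finset.sum_congr rfl (fun j _ => by simp [bet, S_inr]; try (split <;> simp))]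
  rw [sum_ind i h1 h2]
  rw [S_inl]
  have hv : ((⟨i - 1, by omega⟩ : Fin g) : ℕ) + 1 = i := by simp; omega
  rw [hv]

lemma B_bet_bet (g i m : ℕ) : Bform g (bet g i) (bet g m) = 0 := by
  simp [Bform, bet]

lemma q_alph (g i : ℕ) (h1 : 1 ≤ i) (h2 : i ≤ g) :
    qform g (alph g i) = if i = (g + 1) / 2 then 1 else 0 := by
  rw [qform]
  rw [show (∑ j : Fin g, (if (j : ℕ) + 1 = (g + 1) / 2 then 1 else 0)
        * alph g i (Sum.inl j))
      = ∑ j : Fin g, (if (j : ℕ) + 1 = i then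
          (if (j : ℕ) + 1 = (g + 1) / 2 then 1 else 0) else 0) from
    Finset.sum_congr rfl (fun j _ => by simp [alph]; try (split <;> split <;> simp_all))]
  rw [sum_ind i h1 h2]
  simp only [alph, mul_zero, Finset.sum_const_zero, add_zero, zero_add]
  have hv : ((⟨i - 1, by omega⟩ : Fin g) : ℕ) + 1 = i := by simp; omega
  rw [hv]

/-- There is a quadratic form `q` with respect to the mod-2 intersection
pairing taking the value `1` on all the vanishing cycles
(`B_{k,·}`, their partners `B_{k,·} + δ_3 + δ_4`, and
`a_1, a_2, a_3, a_4, b_1, b_2, b_3, b_4`), and with `q(δ_j) = 1` for all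
`j ∈ {1, …, 8}`. -/
theorem typeIIBflat_odd_genus_spin (g : ℕ) (hg : 3 ≤ g) (hgodd : Odd g) :
    ∃ q : MCKVec g → ZMod 2,
      (∀ x y : MCKVec g, q (x + y) = q x + q y + Bform g x y) ∧
      (∀ k ≤ g, q (BIIBflat g k) = 1) ∧
      (∀ k ≤ g, q (BIIBflat g k + dlt g 3 + dlt g 4) = 1) ∧
      q (bet g ((g + 1) / 2) + dlt g 7) = 1 ∧
      q (bet g ((g + 1) / 2) + dlt g 5) = 1 ∧
      q (bet g ((g + 1) / 2) + dlt g 3) = 1 ∧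
      q (bet g ((g + 1) / 2) + dlt g 3 + dlt g 5 + dlt g 7) = 1 ∧
      q (bet g ((g + 1) / 2) + dlt g 2 + dlt g 4 + dlt g 8) = 1 ∧
      q (bet g ((g + 1) / 2) + dlt g 2 + dlt g 4 + dlt g 6) = 1 ∧
      q (bet g ((g + 1) / 2) + dlt g 2) = 1 ∧
      q (bet g ((g + 1) / 2) + dlt g 2 + dlt g 6 + dlt g 8) = 1 ∧
      (∀ j, 1 ≤ j → j ≤ 8 → q (dlt g j) = 1) := by
  obtain ⟨t, ht⟩ := hgodd
  have hg1 : 1 ≤ g := by omega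
  have main : ∀ k ≤ g, qform g (BIIBflat g k) = 1 := by
    intro k hk
    by_cases h0 : k = 0
    · subst h0
      unfold BIIBflat
      rw [if_pos rfl]
      rw [q_add_dlt g _ 7 (by norm_num) (by norm_num),
          q_add_dlt g _ 6 (by norm_num) (by norm_num),
          q_S g 1 g hg1, if_pos (Finset.mem_Icc.mpr ⟨by omega, by omega⟩)]
      decide
    · by_cases h1 : k = 1
      · subst h1
        unfold BIIBflat
        rw [if_neg h0, if_pos rfl]
        rw [q_add_dlt g _ 7 (by norm_num) (by norm_num),
            q_add_dlt g _ 6 (by norm_num) (by norm_num),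
            qform_add, qform_add, q_bet, q_bet, B_add_left, B_bet_bet,
            q_S g 1 g hg1,
            B_S_bet g 1 g 1 le_rfl hg1,
            B_S_bet g 1 g g hg1 le_rfl,
            if_pos (Finset.mem_Icc.mpr ⟨by omega, by omega⟩),
            if_pos (Finset.mem_Icc.mpr ⟨by omega, by omega⟩),
            if_pos (Finset.mem_Icc.mpr ⟨by omega, by omega⟩)]
        decide
      · by_cases hgk : k = g
        · unfold BIIBflat
          rw [if_neg h0, if_neg h1, if_pos hgk]
          rw [q_add_dlt g _ 8 (by norm_num) (by norm_num),
              q_add_dlt g _ 7 (by norm_num) (by norm_num),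
              q_add_dlt g _ 4 (by norm_num) (by norm_num),
              q_add_dlt g _ 2 (by norm_num) (by norm_num),
              q_alph g ((g + 1) / 2) (by omega) (by omega),
              if_pos rfl]
          decide
        · by_cases hev : k % 2 = 0
          · unfold BIIBflat
            rw [if_neg h0, if_neg h1, if_neg hgk, if_pos hev]
            rw [q_add_dlt g _ 7 (by norm_num) (by norm_num),
                q_add_dlt g _ 6 (by norm_num) (by norm_num),
                qform_add, qform_add, q_bet, q_bet, B_add_left, B_bet_bet,
                q_S g _ _ hg1,
                B_S_bet g _ _ (k / 2) (by omega) (by omega),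
                B_S_bet g _ _ (g + 1 - k / 2) (by omega) (by omega),
                if_pos (Finset.mem_Icc.mpr ⟨by omega, by omega⟩),
                if_neg (by simp only [Finset.mem_Icc]; omega),
                if_neg (by simp only [Finset.mem_Icc]; omega)]
            decide
          · unfold BIIBflat
            rw [if_neg h0, if_neg h1, if_neg hgk, if_neg hev]
            rw [q_add_dlt g _ 7 (by norm_num) (by norm_num),
                q_add_dlt g _ 6 (by norm_num) (by norm_num),
                qform_add, qform_add, q_bet, q_bet, B_add_left, B_bet_bet,
                q_S g _ _ hg1,
                B_S_bet g _ _ ((k - 1) / 2 + 1) (by omega) (by omega),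
                B_S_bet g _ _ (g - (k - 1) / 2) (by omega) (by omega),
                if_pos (Finset.mem_Icc.mpr ⟨by omega, by omega⟩),
                if_pos (Finset.mem_Icc.mpr ⟨by omega, by omega⟩),
                if_pos (Finset.mem_Icc.mpr ⟨by omega, by omega⟩)]
            decide
  refine ⟨qform g, qform_add g, main, ?_, ?_, ?_, ?_, ?_, ?_, ?_, ?_, ?_, ?_⟩
  · intro k hk
    rw [q_add_dlt g _ 4 (by norm_num) (by norm_num),
        q_add_dlt g _ 3 (by norm_num) (by norm_num), main k hk]
    decide
  · rw [q_add_dlt g _ 7 (by norm_num) (by norm_num), q_bet]; decide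
  · rw [q_add_dlt g _ 5 (by norm_num) (by norm_num), q_bet]; decide
  · rw [q_add_dlt g _ 3 (by norm_num) (by norm_num), q_bet]; decide
  · rw [q_add_dlt g _ 7 (by norm_num) (by norm_num),
        q_add_dlt g _ 5 (by norm_num) (by norm_num),
        q_add_dlt g _ 3 (by norm_num) (by norm_num), q_bet]
    decide
  · rw [q_add_dlt g _ 8 (by norm_num) (by norm_num),
        q_add_dlt g _ 4 (by norm_num) (by norm_num),
        q_add_dlt g _ 2 (by norm_num) (by norm_num), q_bet]
    decide
  · rw [q_add_dlt g _ 6 (by norm_num) (by norm_num),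
        q_add_dlt g _ 4 (by norm_num) (by norm_num),
        q_add_dlt g _ 2 (by norm_num) (by norm_num), q_bet]
    decide
  · rw [q_add_dlt g _ 2 (by norm_num) (by norm_num), q_bet]; decide
  · rw [q_add_dlt g _ 8 (by norm_num) (by norm_num),
        q_add_dlt g _ 6 (by norm_num) (by norm_num),
        q_add_dlt g _ 2 (by norm_num) (by norm_num), q_bet]
    decide
  · intro j hj1 hj8
    exact q_dlt g j hj1 hj8
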